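/- Let |q|<1 and let x,y,z be complex with y ≠ q^{-n} and y ≠ xzq^n for all integers n ≥ 0. Define φ(x,y,z,q) = Σ_{n≥0} x^n q^{n(n+1)/2} (-z;q)_n / ((y;q)_{n+1} (q;q)_n), and for each positive integer m define e_m(x,y,z,q) = Σ_{n,j,l≥0} x^n q^{n(n+1)/2} [n+j choose j]_q y^j [m-1-j-l choose n]_q q^{l(l-1)/2} z^l [n choose l]_q. Then for m ≥ 2, φ(xq^m,y,z,q) = (e_m(x,y,z,q) φ(xq,y,z,q) − e_{m-1}(xq,y,z,q) φ(x,y,z,q)) / ∏_{j=1}^{m-1}(y − xz q^j). -/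

import Mathlib

open scoped BigOperators

noncomputable def qPoch (a q : ℂ) (n : ℕ) : ℂ := ∏ i ∈ Finset.range n, (1 - a * q ^ i)

noncomputable def qPochInf (a q : ℂ) : ℂ := ∏' i : ℕ, (1 - a * q ^ i)

/-- q-Pochhammer with integer index, standard convention for negative index. -/
noncomputable def qPochZ (a q : ℂ) (n : ℤ) : ℂ :=
  if 0 ≤ n then ∏ i ∈ Finset.range n.toNat, (1 - a * q ^ i)
  else 1 / ∏ i ∈ Finset.range (-n).toNat, (1 - a * q ^ (-(i : ℤ) - 1))

/-- Gaussian binomial coefficient, zero unless 0 ≤ k ≤ n. -/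
noncomputable def qbinom (n k : ℤ) (q : ℂ) : ℂ :=
  if 0 ≤ k ∧ k ≤ n then
    (∏ i ∈ Finset.range k.toNat, (1 - q ^ (n - (i : ℤ)))) /
      (∏ i ∈ Finset.range k.toNat, (1 - q ^ (i + 1)))
  else 0

noncomputable def phi (x y z q : ℂ) : ℂ :=
  ∑' n : ℕ, x ^ n * q ^ (n * (n + 1) / 2) * qPoch (-z) q n /
    (qPoch y q (n + 1) * qPoch q q n)

noncomputable def eP (m : ℕ) (x y z q : ℂ) : ℂ :=
  ∑' n : ℕ, ∑' j : ℕ, ∑' l : ℕ,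
    x ^ n * q ^ (n * (n + 1) / 2) * qbinom ((n : ℤ) + j) j q * y ^ j *
      qbinom ((m : ℤ) - 1 - j - l) n q * q ^ (l * (l - 1) / 2) * z ^ l * qbinom n l q

/-!
Both sides satisfy the same three-term recurrence in `m`.

The coefficients `c n` of `φ x = ∑ xⁿ c n` satisfy
`(1 - y q^(n+1)) (1 - q^(n+1)) c (n+1) = q^(n+1) (1 + z qⁿ) c n`; summing this against `xⁿ`
gives `(y - x z q) φ(x q²) = (1 + y + x q) φ(x q) - φ(x)`. Hence
`u k = φ(x q^(k+1)) ∏_{j=1}^{k} (y - x z q^j)` satisfies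
`u (k+2) = (1 + y + x q^(k+2)) u (k+1) - (y - x z q^(k+1)) u k`.

Applying the two q-Pascal rules termwise to the triple sums gives
`e_(m+2) = (1 + y + x q^(m+1)) e_(m+1) - (y - x z q^m) e_m`, with `e_0 = 0` and `e_1 = 1`,
so `v k = e_(k+1)(x) φ(x q) - e_k(x q) φ(x)` satisfies the same recurrence, and `u` and `v`
agree at `k = 0, 1`.
-/

open Finset Filter Topology

section QBinomial

variable {q : ℂ}

lemma one_sub_pow_ne_zero_of_not_isOfFinOrder (hq : ¬IsOfFinOrder q) {k : ℕ} (hk : k ≠ 0) :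
    1 - q ^ k ≠ 0 :=
  sub_ne_zero.2 fun h => hq (isOfFinOrder_iff_pow_eq_one.2 ⟨k, Nat.pos_of_ne_zero hk, h.symm⟩)

lemma prod_one_sub_pow_succ_ne_zero (hq : ¬IsOfFinOrder q) (k : ℕ) :
    ∏ i ∈ range k, (1 - q ^ (i + 1)) ≠ 0 :=
  prod_ne_zero_iff.2 fun i _ => one_sub_pow_ne_zero_of_not_isOfFinOrder hq (Nat.add_one_ne_zero i)

lemma qbinom_of_lt {n k : ℤ} (h : n < k) : qbinom n k q = 0 := by
  rw [qbinom, if_neg]; omega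

lemma qbinom_zero_right {n : ℤ} (h : 0 ≤ n) : qbinom n 0 q = 1 := by
  simp [qbinom, h]

lemma qbinom_natCast {n k : ℕ} (h : k ≤ n) :
    qbinom n k q = (∏ i ∈ range k, (1 - q ^ (n - i))) / ∏ i ∈ range k, (1 - q ^ (i + 1)) := by
  rw [qbinom, if_pos ⟨k.cast_nonneg, by exact_mod_cast h⟩, Int.toNat_natCast]
  congr 1
  refine prod_congr rfl fun i hi => ?_
  rw [← Nat.cast_sub (by simp at hi; omega), zpow_natCast]

lemma qbinom_succ_succ_mul (hq : ¬IsOfFinOrder q) (n k : ℕ) :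
    (1 - q ^ (k + 1)) * qbinom ((n : ℤ) + 1) ((k : ℤ) + 1) q =
      (1 - q ^ (n + 1)) * qbinom n k q := by
  rcases le_or_gt k n with hk | hk
  · rw [← Nat.cast_add_one, ← Nat.cast_add_one, qbinom_natCast (by omega), qbinom_natCast hk,
      prod_range_succ', prod_range_succ]
    simp only [Nat.add_sub_add_right, Nat.sub_zero]
    have := prod_one_sub_pow_succ_ne_zero hq k
    have := one_sub_pow_ne_zero_of_not_isOfFinOrder hq (Nat.add_one_ne_zero k)
    field_simp
  · rw [qbinom_of_lt (by omega), qbinom_of_lt (by omega), mul_zero, mul_zero]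

lemma qbinom_succ_right_mul (hq : ¬IsOfFinOrder q) (n k : ℕ) :
    (1 - q ^ (k + 1)) * qbinom n ((k : ℤ) + 1) q = (1 - q ^ (n - k)) * qbinom n k q := by
  rcases lt_or_ge k n with hk | hk
  · rw [← Nat.cast_add_one, qbinom_natCast hk, qbinom_natCast hk.le, prod_range_succ,
      prod_range_succ]
    have := prod_one_sub_pow_succ_ne_zero hq k
    have := one_sub_pow_ne_zero_of_not_isOfFinOrder hq (Nat.add_one_ne_zero k)
    field_simp
  · rw [qbinom_of_lt (by omega), Nat.sub_eq_zero_of_le hk, pow_zero, sub_self, mul_zero, zero_mul]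

lemma qbinom_self (hq : ¬IsOfFinOrder q) (n : ℕ) : qbinom n n q = 1 := by
  induction n with
  | zero => exact qbinom_zero_right le_rfl
  | succ n ih =>
    refine mul_left_cancel₀ (one_sub_pow_ne_zero_of_not_isOfFinOrder hq (Nat.add_one_ne_zero n)) ?_
    push_cast
    rw [qbinom_succ_succ_mul hq, ih]

lemma pow_mul_pow_sub_mul_qbinom (q : ℂ) (n k : ℕ) :
    q ^ (k + 1) * q ^ (n - k) * qbinom n k q = q ^ (n + 1) * qbinom n k q := by
  rcases le_or_gt k n with hk | hk
  · rw [← pow_add, show k + 1 + (n - k) = n + 1 by omega]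
  · rw [qbinom_of_lt (by omega), mul_zero, mul_zero]

lemma qbinom_succ_succ' (hq : ¬IsOfFinOrder q) (n k : ℕ) :
    qbinom ((n : ℤ) + 1) ((k : ℤ) + 1) q =
      qbinom n ((k : ℤ) + 1) q + q ^ (n - k) * qbinom n k q := by
  refine mul_left_cancel₀ (one_sub_pow_ne_zero_of_not_isOfFinOrder hq (Nat.add_one_ne_zero k)) ?_
  linear_combination qbinom_succ_succ_mul hq n k - qbinom_succ_right_mul hq n k
    + pow_mul_pow_sub_mul_qbinom q n k

lemma qbinom_succ_succ (hq : ¬IsOfFinOrder q) {N : ℤ} (hN : 0 ≤ N) (k : ℕ) :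
    qbinom (N + 1) ((k : ℤ) + 1) q = q ^ (k + 1) * qbinom N ((k : ℤ) + 1) q + qbinom N k q := by
  lift N to ℕ using hN
  refine mul_left_cancel₀ (one_sub_pow_ne_zero_of_not_isOfFinOrder hq (Nat.add_one_ne_zero k)) ?_
  linear_combination qbinom_succ_succ_mul hq N k - q ^ (k + 1) * qbinom_succ_right_mul hq N k
    + pow_mul_pow_sub_mul_qbinom q N k

end QBinomial

lemma summable_of_norm_succ_le_mul {E : Type*} [NormedAddCommGroup E] [CompleteSpace E]
    {f : ℕ → E} {ρ : ℕ → ℝ} (hf : ∀ n, ‖f (n + 1)‖ ≤ ρ n * ‖f n‖)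
    (hρ : Tendsto ρ atTop (𝓝 0)) : Summable f := by
  refine summable_of_ratio_norm_eventually_le (r := 1 / 2) (by norm_num) ?_
  filter_upwards [hρ.eventually_le_const (by norm_num : (0 : ℝ) < 1 / 2)] with n hn
  exact (hf n).trans (mul_le_mul_of_nonneg_right hn (norm_nonneg _))

lemma qPoch_succ (a q : ℂ) (n : ℕ) : qPoch a q (n + 1) = qPoch a q n * (1 - a * q ^ n) :=
  prod_range_succ _ _

section Phi

variable {q y z : ℂ}

noncomputable def phiCoeff (y z q : ℂ) (n : ℕ) : ℂ :=
  q ^ (n * (n + 1) / 2) * qPoch (-z) q n / (qPoch y q (n + 1) * qPoch q q n)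

lemma phi_eq_tsum (x y z q : ℂ) : phi x y z q = ∑' n, x ^ n * phiCoeff y z q n :=
  tsum_congr fun n => by rw [phiCoeff]; ring

lemma phiCoeff_succ (n : ℕ) :
    phiCoeff y z q (n + 1) =
      q ^ (n + 1) * (1 + z * q ^ n) / ((1 - y * q ^ (n + 1)) * (1 - q ^ (n + 1))) *
        phiCoeff y z q n := by
  have htri : (n + 1) * (n + 1 + 1) / 2 = n * (n + 1) / 2 + (n + 1) := by
    have : (n + 1) * (n + 1 + 1) = n * (n + 1) + 2 * (n + 1) := by ring
    omega
  rw [phiCoeff, phiCoeff, div_mul_div_comm, htri, qPoch_succ y q (n + 1), qPoch_succ q q n,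
    qPoch_succ (-z) q n, pow_add, pow_succ q n]
  congr 1 <;> ring

lemma tendsto_phiCoeff_ratio (hq : ‖q‖ < 1) (x : ℂ) :
    Tendsto (fun n : ℕ => x * (q ^ (n + 1) * (1 + z * q ^ n) /
      ((1 - y * q ^ (n + 1)) * (1 - q ^ (n + 1))))) atTop (𝓝 0) := by
  let g : ℂ → ℂ := fun w => x * (q * w * (1 + z * w) / ((1 - y * (q * w)) * (1 - q * w)))
  have hg : ContinuousAt g 0 := by fun_prop (disch := simp)
  have := hg.tendsto.comp (tendsto_pow_atTop_nhds_zero_of_norm_lt_one hq)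
  simpa [g, Function.comp_def, pow_succ'] using this

lemma summable_phi (hq : ‖q‖ < 1) (x : ℂ) : Summable fun n => x ^ n * phiCoeff y z q n := by
  have hρ := (tendsto_phiCoeff_ratio (y := y) (z := z) hq x).norm
  rw [norm_zero] at hρ
  refine summable_of_norm_succ_le_mul (fun n => le_of_eq ?_) hρ
  rw [phiCoeff_succ, pow_succ, ← norm_mul]
  congr 1
  ring

lemma phiCoeff_succ_mul {n : ℕ} (hq : 1 - q ^ (n + 1) ≠ 0) (hy : 1 - y * q ^ (n + 1) ≠ 0) :
    (1 - y * q ^ (n + 1)) * (1 - q ^ (n + 1)) * phiCoeff y z q (n + 1) =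
      q ^ (n + 1) * (1 + z * q ^ n) * phiCoeff y z q n := by
  rw [phiCoeff_succ, ← mul_assoc, mul_div_cancel₀ _ (mul_ne_zero hy hq)]

lemma phi_recurrence (hq : ‖q‖ < 1) (hy : ∀ n : ℕ, y * q ^ (n + 1) ≠ 1) (x : ℂ) :
    (y - x * z * q) * phi (x * q ^ 2) y z q =
      (1 + y + x * q) * phi (x * q) y z q - phi x y z q := by
  have hq' : ¬IsOfFinOrder q := fun h => hq.ne h.norm_eq_one
  set c := phiCoeff y z q
  have hsum (w : ℂ) : HasSum (fun n => w ^ n * c n) (phi w y z q) := by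
    rw [phi_eq_tsum]; exact (summable_phi hq w).hasSum
  set L := fun n => (1 - y * q ^ n) * (1 - q ^ n) * (x ^ n * c n)
  have hL : HasSum L (phi x y z q - (1 + y) * phi (x * q) y z q + y * phi (x * q ^ 2) y z q) := by
    refine (((hsum x).sub ((hsum (x * q)).mul_left (1 + y))).add
      ((hsum (x * q ^ 2)).mul_left y)).congr_fun fun n => ?_
    simp only [L]; ring
  have hR : HasSum (fun n => L (n + 1))
      (x * q * phi (x * q) y z q + x * z * q * phi (x * q ^ 2) y z q) := by
    refine (((hsum (x * q)).mul_left (x * q)).add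
      ((hsum (x * q ^ 2)).mul_left (x * z * q))).congr_fun fun n => ?_
    have := phiCoeff_succ_mul (z := z)
      (one_sub_pow_ne_zero_of_not_isOfFinOrder hq' (Nat.add_one_ne_zero n))
      (sub_ne_zero.2 (hy n).symm)
    simp only [L]
    linear_combination x ^ (n + 1) * this
  have hL' := (hasSum_nat_add_iff 1).1 hR
  simp only [L, sum_range_one, pow_zero, sub_self] at hL'
  linear_combination hL.unique hL'

end Phi

section SimplexSums

variable {f : ℕ → ℕ → ℕ → ℂ} {m : ℕ}

lemma sum_range_box_eq (hf : ∀ n j l, m ≤ n + j + l → f n j l = 0) {B₁ B₂ B₃ : ℕ}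
    (h₁ : m ≤ B₁) (h₂ : m ≤ B₂) (h₃ : m ≤ B₃) :
    ∑ n ∈ range B₁, ∑ j ∈ range B₂, ∑ l ∈ range B₃, f n j l =
      ∑ n ∈ range m, ∑ j ∈ range m, ∑ l ∈ range m, f n j l := by
  calc _ = ∑ n ∈ range B₁, ∑ j ∈ range B₂, ∑ l ∈ range m, f n j l :=
        sum_congr rfl fun n _ => sum_congr rfl fun j _ =>
          eventually_constant_sum (fun l hl => hf n j l (by omega)) h₃
    _ = ∑ n ∈ range B₁, ∑ j ∈ range m, ∑ l ∈ range m, f n j l :=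
        sum_congr rfl fun n _ =>
          eventually_constant_sum (fun j hj => sum_eq_zero fun l _ => hf n j l (by omega)) h₂
    _ = _ := eventually_constant_sum
        (fun n hn => sum_eq_zero fun j _ => sum_eq_zero fun l _ => hf n j l (by omega)) h₁

lemma tsum_tsum_tsum_eq_sum_range (hf : ∀ n j l, m ≤ n + j + l → f n j l = 0) :
    ∑' n, ∑' j, ∑' l, f n j l = ∑ n ∈ range m, ∑ j ∈ range m, ∑ l ∈ range m, f n j l := by
  have hl (n j : ℕ) : ∑' l, f n j l = ∑ l ∈ range m, f n j l :=
    tsum_eq_sum fun l hl => hf n j l (by simp at hl; omega)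
  have hj (n : ℕ) : ∑' j, ∑ l ∈ range m, f n j l = ∑ j ∈ range m, ∑ l ∈ range m, f n j l :=
    tsum_eq_sum fun j hj => sum_eq_zero fun l _ => hf n j l (by simp at hj; omega)
  simp_rw [hl, hj]
  exact tsum_eq_sum fun n hn => sum_eq_zero fun j _ => sum_eq_zero fun l _ =>
    hf n j l (by simp at hn; omega)

end SimplexSums

noncomputable def eTerm (m : ℕ) (x y z q : ℂ) (n j l : ℕ) : ℂ :=
  x ^ n * q ^ (n * (n + 1) / 2) * qbinom ((n : ℤ) + j) j q * y ^ j *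
    qbinom ((m : ℤ) - 1 - j - l) n q * q ^ (l * (l - 1) / 2) * z ^ l * qbinom n l q

/-- The terms of `eP (m + 1) - eP m - y ^ m`. -/
noncomputable def dTerm (m : ℕ) (x y z q : ℂ) (n j l : ℕ) : ℂ :=
  x ^ (n + 1) * q ^ (n * (n + 1) / 2 + (m - j - l)) * qbinom ((n : ℤ) + 1 + j) j q * y ^ j *
    qbinom ((m : ℤ) - 1 - j - l) n q * q ^ (l * (l - 1) / 2) * z ^ l * qbinom ((n : ℤ) + 1) l q

noncomputable def dSum (m : ℕ) (x y z q : ℂ) : ℂ :=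
  ∑ n ∈ range m, ∑ j ∈ range m, ∑ l ∈ range m, dTerm m x y z q n j l

section EPolynomial

variable {q x y z : ℂ}

lemma eTerm_eq_zero {m n j l : ℕ} (h : m ≤ n + j + l) : eTerm m x y z q n j l = 0 := by
  rw [eTerm, qbinom_of_lt (show (m : ℤ) - 1 - j - l < n by omega)]
  ring

lemma dTerm_eq_zero {m n j l : ℕ} (h : m ≤ n + j + l) : dTerm m x y z q n j l = 0 := by
  rw [dTerm, qbinom_of_lt (show (m : ℤ) - 1 - j - l < n by omega)]
  ring

lemma eP_eq_sum_range {m B₁ B₂ B₃ : ℕ} (h₁ : m ≤ B₁) (h₂ : m ≤ B₂) (h₃ : m ≤ B₃) :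
    eP m x y z q = ∑ n ∈ range B₁, ∑ j ∈ range B₂, ∑ l ∈ range B₃, eTerm m x y z q n j l := by
  rw [sum_range_box_eq (fun _ _ _ => eTerm_eq_zero) h₁ h₂ h₃, eP]
  exact tsum_tsum_tsum_eq_sum_range fun _ _ _ => eTerm_eq_zero

lemma dSum_eq_sum_range {m B₁ B₂ B₃ : ℕ} (h₁ : m ≤ B₁) (h₂ : m ≤ B₂) (h₃ : m ≤ B₃) :
    dSum m x y z q = ∑ n ∈ range B₁, ∑ j ∈ range B₂, ∑ l ∈ range B₃, dTerm m x y z q n j l :=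
  (sum_range_box_eq (fun _ _ _ => dTerm_eq_zero) h₁ h₂ h₃).symm

lemma eP_zero : eP 0 x y z q = 0 := by
  simp [eP_eq_sum_range le_rfl le_rfl le_rfl]

lemma eP_one : eP 1 x y z q = 1 := by
  simp [eP_eq_sum_range le_rfl le_rfl le_rfl, eTerm, qbinom_zero_right]

lemma eTerm_zero_left (hq : ¬IsOfFinOrder q) (m j l : ℕ) :
    eTerm m x y z q 0 j l = if l = 0 ∧ j < m then y ^ j else 0 := by
  rcases l with _ | l
  · rcases lt_or_ge j m with hj | hj
    · simp [eTerm, hj, qbinom_self hq, qbinom_zero_right (show (0 : ℤ) ≤ m - 1 - j by omega),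
        qbinom_zero_right (le_refl (0 : ℤ))]
    · simp [eTerm, not_lt.2 hj, qbinom_of_lt (show (m : ℤ) - 1 - j < 0 by omega)]
  · simp [eTerm, qbinom_of_lt (show (0 : ℤ) < l + 1 by omega)]

lemma sum_eTerm_zero_left (hq : ¬IsOfFinOrder q) {m B : ℕ} (hB : m ≤ B) :
    ∑ j ∈ range B, ∑ l ∈ range B, eTerm m x y z q 0 j l = ∑ j ∈ range m, y ^ j := by
  rcases B.eq_zero_or_pos with rfl | hB₀
  · simp [Nat.le_zero.1 hB]
  simp only [eTerm_zero_left hq, ite_and, sum_ite_eq', mem_range, hB₀, if_true]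
  exact (eventually_constant_sum (fun j hj => if_neg (by omega)) hB).trans
    (sum_congr rfl fun j hj => if_pos (by simpa using hj))

lemma eP_eq_sum_geom_add (hq : ¬IsOfFinOrder q) {m B : ℕ} (hB : m ≤ B) :
    eP m x y z q = ∑ j ∈ range m, y ^ j +
      ∑ n ∈ range B, ∑ j ∈ range (B + 1), ∑ l ∈ range (B + 1), eTerm m x y z q (n + 1) j l := by
  rw [eP_eq_sum_range (B₁ := B + 1) (B₂ := B + 1) (B₃ := B + 1) (by omega) (by omega) (by omega),
    sum_range_succ', sum_eTerm_zero_left hq (by omega), add_comm]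

lemma eTerm_succ_eq_add_dTerm (hq : ¬IsOfFinOrder q) (m n j l : ℕ) :
    eTerm (m + 1) x y z q (n + 1) j l = eTerm m x y z q (n + 1) j l + dTerm m x y z q n j l := by
  rcases lt_or_ge m (n + j + l + 1) with h | h
  · rw [eTerm_eq_zero (by omega), eTerm_eq_zero (by omega), dTerm_eq_zero (by omega), add_zero]
  obtain ⟨k, rfl⟩ : ∃ k, m = n + j + l + k + 1 := ⟨m - (n + j + l + 1), by omega⟩
  have hexp : (n + 1) * (n + 1 + 1) / 2 + k = n * (n + 1) / 2 + (n + j + l + k + 1 - j - l) := by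
    have : (n + 1) * (n + 1 + 1) = n * (n + 1) + 2 * (n + 1) := by ring
    omega
  rw [eTerm, eTerm, dTerm,
    show ((n + j + l + k + 1 + 1 : ℕ) : ℤ) - 1 - j - l = ((n + k : ℕ) : ℤ) + 1 by push_cast; ring,
    show ((n + j + l + k + 1 : ℕ) : ℤ) - 1 - j - l = ((n + k : ℕ) : ℤ) by push_cast; ring,
    Nat.cast_succ n, qbinom_succ_succ' hq, Nat.add_sub_cancel_left, ← hexp, pow_add]
  ring

lemma eP_succ (hq : ¬IsOfFinOrder q) (m : ℕ) (x y z : ℂ) :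
    eP (m + 1) x y z q = eP m x y z q + dSum m x y z q + y ^ m := by
  rw [eP_eq_sum_geom_add hq le_rfl, eP_eq_sum_geom_add hq (Nat.le_succ m),
    dSum_eq_sum_range (B₁ := m + 1) (B₂ := m + 2) (B₃ := m + 2) (by omega) (by omega) (by omega)]
  simp only [eTerm_succ_eq_add_dTerm hq, sum_add_distrib, sum_range_succ _ m]
  ring

lemma dTerm_succ (hq : ¬IsOfFinOrder q) (m n j l : ℕ) :
    dTerm (m + 1) x y z q n j l =
      x * q ^ (m + 1) * eTerm (m + 1) x y z q n j l
        + (if l = 0 then 0 else x * z * q ^ m * eTerm m x y z q n j (l - 1))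
        + (if j = 0 then 0 else y * dTerm m x y z q n (j - 1) l) := by
  rcases lt_or_ge m (n + j + l) with h | h
  · have hl : l ≠ 0 → eTerm m x y z q n j (l - 1) = 0 := fun _ => eTerm_eq_zero (by omega)
    have hj : j ≠ 0 → dTerm m x y z q n (j - 1) l = 0 := fun _ => dTerm_eq_zero (by omega)
    rw [dTerm_eq_zero (by omega), eTerm_eq_zero (by omega)]
    split_ifs <;> simp_all
  obtain ⟨k, rfl⟩ := Nat.exists_eq_add_of_le h
  rcases j with _ | j <;> rcases l with _ | l <;>
    simp only [dTerm, eTerm, Nat.add_one_ne_zero, if_true, if_false, Nat.add_sub_cancel,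
      add_zero, Nat.sub_zero] <;>
    push_cast
  · simp (disch := positivity) only [qbinom_zero_right]
    ring_nf
  · simp (disch := positivity) only [qbinom_zero_right]
    have htri : (l + 1) * l / 2 = l * (l - 1) / 2 + l := by simpa using Nat.triangle_succ l
    rw [qbinom_succ_succ hq (N := n) (by positivity), htri,
      show n + (l + 1) + k - l = n + k + 1 by omega]
    ring_nf
  · simp (disch := positivity) only [qbinom_zero_right]
    rw [← add_assoc (↑n + 1 : ℤ), qbinom_succ_succ hq (by positivity),
      show n + (j + 1) + k - j = n + k + 1 by omega]
    ring_nf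
  · have htri : (l + 1) * l / 2 = l * (l - 1) / 2 + l := by simpa using Nat.triangle_succ l
    rw [← add_assoc (↑n + 1 : ℤ), qbinom_succ_succ hq (by positivity),
      qbinom_succ_succ hq (N := n) (by positivity), htri,
      show n + (j + 1) + (l + 1) + k - j - (l + 1) = n + k + 1 by omega]
    ring_nf
lemma dSum_succ (hq : ¬IsOfFinOrder q) (m : ℕ) (x y z : ℂ) :
    dSum (m + 1) x y z q =
      x * q ^ (m + 1) * eP (m + 1) x y z q + x * z * q ^ m * eP m x y z q + y * dSum m x y z q := by
  have hl (n j : ℕ) : ∑ l ∈ range (m + 2),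
      (if l = 0 then 0 else x * z * q ^ m * eTerm m x y z q n j (l - 1)) =
        x * z * q ^ m * ∑ l ∈ range (m + 1), eTerm m x y z q n j l := by
    rw [sum_range_succ', mul_sum]; simp
  have hj (n : ℕ) : ∑ j ∈ range (m + 2), ∑ l ∈ range (m + 2),
      (if j = 0 then 0 else y * dTerm m x y z q n (j - 1) l) =
        y * ∑ j ∈ range (m + 1), ∑ l ∈ range (m + 2), dTerm m x y z q n j l := by
    rw [sum_range_succ', mul_sum]; simp [mul_sum]
  rw [dSum_eq_sum_range (B₁ := m + 2) (B₂ := m + 2) (B₃ := m + 2) (by omega) (by omega) (by omega),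
    eP_eq_sum_range (B₁ := m + 2) (B₂ := m + 2) (B₃ := m + 2) (by omega) (by omega) (by omega),
    eP_eq_sum_range (B₁ := m + 2) (B₂ := m + 2) (B₃ := m + 1) (by omega) (by omega) (by omega),
    dSum_eq_sum_range (B₁ := m + 2) (B₂ := m + 1) (B₃ := m + 2) (by omega) (by omega) (by omega)]
  simp only [dTerm_succ hq, sum_add_distrib, hl, hj, mul_sum]

lemma eP_succ_succ (hq : ¬IsOfFinOrder q) (m : ℕ) (x y z : ℂ) :
    eP (m + 2) x y z q =
      (1 + y + x * q ^ (m + 1)) * eP (m + 1) x y z q - (y - x * z * q ^ m) * eP m x y z q := by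
  linear_combination eP_succ hq (m + 1) x y z + dSum_succ hq m x y z - y * eP_succ hq m x y z

end EPolynomial

lemma eq_of_two_step_recurrence {α : Type*} {u v : ℕ → α} (F : ℕ → α → α → α)
    (hu : ∀ k, u (k + 2) = F k (u k) (u (k + 1))) (hv : ∀ k, v (k + 2) = F k (v k) (v (k + 1)))
    (h₀ : u 0 = v 0) (h₁ : u 1 = v 1) : u = v := by
  funext k
  induction k using Nat.twoStepInduction with
  | zero => exact h₀
  | one => exact h₁
  | more k ihk ihk1 => rw [hu, hv, ihk, ihk1]

lemma phi_mul_prod_eq {q y z : ℂ} (hq : ‖q‖ < 1) (hy : ∀ n : ℕ, y * q ^ (n + 1) ≠ 1)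
    (x : ℂ) (k : ℕ) :
    phi (x * q ^ (k + 1)) y z q * ∏ j ∈ Icc 1 k, (y - x * z * q ^ j) =
      eP (k + 1) x y z q * phi (x * q) y z q - eP k (x * q) y z q * phi x y z q := by
  have hq' : ¬IsOfFinOrder q := fun h => hq.ne h.norm_eq_one
  refine congrFun (eq_of_two_step_recurrence
    (u := fun k => phi (x * q ^ (k + 1)) y z q * ∏ j ∈ Icc 1 k, (y - x * z * q ^ j))
    (v := fun k => eP (k + 1) x y z q * phi (x * q) y z q - eP k (x * q) y z q * phi x y z q)
    (fun k a b => (1 + y + x * q ^ (k + 2)) * b - (y - x * z * q ^ (k + 1)) * a)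
    (fun i => ?_) (fun i => ?_) ?_ ?_) k
  · have h := phi_recurrence (z := z) hq hy (x * q ^ (i + 1))
    rw [show x * q ^ (i + 1) * q ^ 2 = x * q ^ (i + 2 + 1) by ring,
      show x * q ^ (i + 1) * q = x * q ^ (i + 1 + 1) by ring] at h
    rw [prod_Icc_succ_top (by omega), prod_Icc_succ_top (by omega)]
    linear_combination (∏ j ∈ Icc 1 i, (y - x * z * q ^ j)) * (y - x * z * q ^ (i + 1)) * h
  · linear_combination phi (x * q) y z q * eP_succ_succ hq' (i + 1) x y z
      - phi x y z q * eP_succ_succ hq' i (x * q) y z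
  · simp [eP_zero, eP_one]
  · have h₂ : eP 2 x y z q = 1 + y + x * q := by
      simpa [eP_one, eP_zero] using eP_succ_succ hq' 0 x y z
    simp only [Nat.reduceAdd, h₂, eP_one, Icc_self, prod_singleton, pow_one]
    linear_combination phi_recurrence (z := z) hq hy x

theorem stmt1 (q x y z : ℂ) (hq : ‖q‖ < 1)
    (hy1 : ∀ n : ℕ, y ≠ q ^ (-(n : ℤ))) (hy2 : ∀ n : ℕ, y ≠ x * z * q ^ n)
    (m : ℕ) (hm : 2 ≤ m) :
    phi (x * q ^ m) y z q =
      (eP m x y z q * phi (x * q) y z q - eP (m - 1) (x * q) y z q * phi x y z q) /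
        ∏ j ∈ Finset.Icc 1 (m - 1), (y - x * z * q ^ j) := by
  obtain ⟨k, rfl⟩ : ∃ k, m = k + 1 := ⟨m - 1, by omega⟩
  have hy : ∀ n : ℕ, y * q ^ (n + 1) ≠ 1 := fun n h =>
    hy1 (n + 1) (by rw [zpow_neg, zpow_natCast]; exact eq_inv_of_mul_eq_one_left h)
  rw [Nat.add_sub_cancel, eq_div_iff (prod_ne_zero_iff.2 fun j _ => sub_ne_zero.2 (hy2 j))]
  exact phi_mul_prod_eq hq hy x k
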